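/- arXiv:2406.14853 — 2 statements merged into one kernel-verified Lean document; each statement's English description precedes it below -/
import Mathlib

section
/- Suppose (Ψ1), (Ψ3), (Φ1), (Φ2) hold and that for all 0 < a ≤ b and c ∈ ℝ the set K^c_{[a,b]} := {u ∈ X : u is a critical point of I_λ with I_λ(u) ≤ c for some λ ∈ [a,b]} is bounded in X. Then for every 0 < a ≤ b and every c ∈ ℝ the set K^c_{[a,b]} is compact. -/
/-! Take a sequence in `K^c_{[a,b]}` with parameters `λ_j`. By (IB), compactness of `[a,b]` and
(Φ2) a subsequence has `λ_j → λ`, `u_j ⇀ w` and the liminf inequality for `Φ'`. Testing the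
criticality of `u_j` at a point of `D(Ψ)` bounds `Ψ(u_j)`, so `Ψ(w) < ∞` because a convex lower
semicontinuous functional is weakly sequentially lower semicontinuous (Mazur); testing at `w` gives
`limsup Ψ(u_j) ≤ Ψ(w)`. Hence `Ψ(u_j) → Ψ(w)` and (Ψ3) makes the convergence strong, after which
the variational inequalities and `I_{λ_j}(u_j) ≤ c` pass to the limit. -/

open Set Filter Metric Bornology Topology

noncomputable section

variable {X : Type*} [NormedAddCommGroup X] [NormedSpace ℝ X]

/-- The functional `I_λ = λΨ − Φ`, with extended-real values. -/
def ILam (Ψ : X → EReal) (Φ : X → ℝ) (lam : ℝ) (u : X) : EReal :=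
  (lam : EReal) * Ψ u - ((Φ u : ℝ) : EReal)

/-- `u` is a critical point of `I_λ = λΨ − Φ` in the sense of Szulkin. -/
def IsCriticalPoint (Ψ : X → EReal) (Φ : X → ℝ) (lam : ℝ) (u : X) : Prop :=
  ∀ v : X, 0 ≤ (lam : EReal) * (Ψ v - Ψ u) - ((fderiv ℝ Φ u (v - u) : ℝ) : EReal)

/-- The set `K^c_{[a,b]}` of critical points of `I_λ`, `λ ∈ [a,b]`, with `I_λ ≤ c`. -/
def critSet (Ψ : X → EReal) (Φ : X → ℝ) (a b c : ℝ) : Set X :=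
  {u : X | ∃ lam ∈ Icc a b, IsCriticalPoint Ψ Φ lam u ∧ ILam Ψ Φ lam u ≤ (c : EReal)}

def TendstoWeakly (v : ℕ → X) (w : X) : Prop :=
  ∀ f : X →L[ℝ] ℝ, Tendsto (fun n => f (v n)) atTop (𝓝 (f w))

section WeakLimits

variable {v : ℕ → X} {w : X}

lemma TendstoWeakly.mem_of_frequently {C : Set X} (h : TendstoWeakly v w) (hC : Convex ℝ C)
    (hCcl : IsClosed C) (hv : ∃ᶠ n in atTop, v n ∈ C) : w ∈ C := by
  by_contra hw
  obtain ⟨f, t, hfC, htw⟩ := geometric_hahn_banach_closed_point hC hCcl hw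
  obtain ⟨n, hnC, hn⟩ := (hv.and_eventually ((h f).eventually (eventually_gt_nhds htw))).exists
  exact (hfC _ hnC).not_gt hn

lemma convex_setOf_le_coe {Ψ : X → EReal}
    (hΨconv : ∀ u v : X, ∀ a b : ℝ, 0 ≤ a → 0 ≤ b → a + b = 1 →
      Ψ (a • u + b • v) ≤ (a : EReal) * Ψ u + (b : EReal) * Ψ v) (r : ℝ) :
    Convex ℝ {x | Ψ x ≤ r} := by
  intro x hx y hy s t hs ht hst
  calc Ψ (s • x + t • y) ≤ (s : EReal) * Ψ x + (t : EReal) * Ψ y := hΨconv x y s t hs ht hst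
    _ ≤ (s : EReal) * r + (t : EReal) * r := by gcongr <;> assumption
    _ = r := by rw [← EReal.coe_mul, ← EReal.coe_mul, ← EReal.coe_add, ← add_mul, hst, one_mul]

lemma TendstoWeakly.le_liminf {Ψ : X → EReal} (h : TendstoWeakly v w)
    (hΨconv : ∀ u v : X, ∀ a b : ℝ, 0 ≤ a → 0 ≤ b → a + b = 1 →
      Ψ (a • u + b • v) ≤ (a : EReal) * Ψ u + (b : EReal) * Ψ v)
    (hΨlsc : LowerSemicontinuous Ψ) : Ψ w ≤ liminf (fun n => Ψ (v n)) atTop :=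
  EReal.le_of_forall_lt_iff_le.1 fun r hr =>
    h.mem_of_frequently (convex_setOf_le_coe hΨconv r) (hΨlsc.isClosed_preimage r)
      ((frequently_lt_of_liminf_lt (h := hr)).mono fun _ => le_of_lt)

end WeakLimits

lemma eventually_lt_of_coe_le_liminf {α : Type*} {l : Filter α} {f : α → ℝ} {L t : ℝ}
    (h : (L : EReal) ≤ liminf (fun j => (f j : EReal)) l) (ht : t < L) : ∀ᶠ j in l, t < f j :=
  (eventually_lt_of_lt_liminf ((EReal.coe_lt_coe_iff.2 ht).trans_le h)).mono
    fun _ => EReal.coe_lt_coe_iff.1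

lemma le_sub_div_of_lt_of_le_mul_sub {a μ s p t d : ℝ} (ha : 0 < a) (haμ : a ≤ μ) (ht0 : t ≤ 0)
    (ht : t < d) (h : d ≤ μ * (s - p)) : p ≤ s - t / a := by
  have htA : 0 ≤ -t / a := div_nonneg (neg_nonneg.2 ht0) ha.le
  rcases le_or_gt p s with hps | hsp
  · linarith [neg_div a t]
  · have : a * (p - s) ≤ -t := by nlinarith
    rw [sub_div' ha.ne', le_div_iff₀ ha]
    linarith

section CriticalPoints

variable {Ψ : X → EReal} {Φ : X → ℝ} {lam q : ℝ} {u : X}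

lemma IsCriticalPoint.ne_top (h : IsCriticalPoint Ψ Φ lam u) (hlam : 0 < lam) : Ψ u ≠ ⊤ := by
  intro htop
  have h0 := h u
  rw [htop, EReal.sub_top, EReal.mul_bot_of_pos (EReal.coe_pos.2 hlam), EReal.bot_sub] at h0
  exact EReal.bot_lt_zero.not_ge h0

lemma IsCriticalPoint.fderiv_le (h : IsCriticalPoint Ψ Φ lam u) (hu : Ψ u = q) {x : X} {s : ℝ}
    (hx : Ψ x = s) : fderiv ℝ Φ u (x - u) ≤ lam * (s - q) := by
  have hcrit := h x
  rw [hx, hu, ← EReal.coe_sub, ← EReal.coe_mul, ← EReal.coe_sub] at hcrit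
  exact sub_nonneg.1 (EReal.coe_nonneg.1 hcrit)

lemma isCriticalPoint_of_fderiv_le (hlam : 0 < lam) (hΨ : ∀ x, Ψ x ≠ ⊥) (hu : Ψ u = q)
    (h : ∀ (x : X) (s : ℝ), Ψ x = s → fderiv ℝ Φ u (x - u) ≤ lam * (s - q)) :
    IsCriticalPoint Ψ Φ lam u := by
  intro x
  induction hx : Ψ x using EReal.rec with
  | bot => exact absurd hx (hΨ x)
  | top =>
    rw [hu, EReal.top_sub_coe, EReal.mul_top_of_pos (EReal.coe_pos.2 hlam), EReal.top_sub_coe]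
    exact le_top
  | coe s =>
    rw [hu, ← EReal.coe_sub, ← EReal.coe_mul, ← EReal.coe_sub]
    exact EReal.coe_nonneg.2 (sub_nonneg.2 (h x s hx))

end CriticalPoints

section CriticalSequences

variable {Ψ : X → EReal} {Φ : X → ℝ} {a lam q : ℝ} {μ p : ℕ → ℝ} {v : ℕ → X} {w : X}

lemma eventually_le_of_isCriticalPoint (ha : 0 < a) (hμa : ∀ j, a ≤ μ j)
    (hcrit : ∀ j, IsCriticalPoint Ψ Φ (μ j) (v j)) (hp : ∀ j, Ψ (v j) = p j) {x : X} {s t : ℝ}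
    (hx : Ψ x = s) (hliminf : ((fderiv ℝ Φ w (x - w) : ℝ) : EReal) ≤
      liminf (fun j => ((fderiv ℝ Φ (v j) (x - v j) : ℝ) : EReal)) atTop)
    (ht0 : t ≤ 0) (ht : t < fderiv ℝ Φ w (x - w)) : ∀ᶠ j in atTop, p j ≤ s - t / a := by
  filter_upwards [eventually_lt_of_coe_le_liminf hliminf ht] with j hj
  exact le_sub_div_of_lt_of_le_mul_sub ha (hμa j) ht0 hj ((hcrit j).fderiv_le (hp j) hx)

lemma exists_tendsto_of_isCriticalPoint
    (hΨconv : ∀ u v : X, ∀ a b : ℝ, 0 ≤ a → 0 ≤ b → a + b = 1 →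
      Ψ (a • u + b • v) ≤ (a : EReal) * Ψ u + (b : EReal) * Ψ v)
    (hΨlsc : LowerSemicontinuous Ψ) (hΨ : ∀ x, Ψ x ≠ ⊥) {x₀ : X} {s₀ : ℝ} (hx₀ : Ψ x₀ = s₀)
    (ha : 0 < a) (hμa : ∀ j, a ≤ μ j) (hcrit : ∀ j, IsCriticalPoint Ψ Φ (μ j) (v j))
    (hp : ∀ j, Ψ (v j) = p j) (hweak : TendstoWeakly v w)
    (hliminf : ∀ x, ((fderiv ℝ Φ w (x - w) : ℝ) : EReal) ≤
      liminf (fun j => ((fderiv ℝ Φ (v j) (x - v j) : ℝ) : EReal)) atTop) :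
    ∃ q : ℝ, Ψ w = q ∧ Tendsto p atTop (𝓝 q) := by
  have hlsc : Ψ w ≤ liminf (fun j => (p j : EReal)) atTop := by
    simpa only [hp] using hweak.le_liminf hΨconv hΨlsc
  set t₀ := min (fderiv ℝ Φ w (x₀ - w) - 1) 0
  have hbound := eventually_le_of_isCriticalPoint ha hμa hcrit hp hx₀ (hliminf x₀)
    (min_le_right _ _) ((min_le_left _ _).trans_lt (sub_one_lt _))
  have hw_top : Ψ w ≠ ⊤ := ne_top_of_le_ne_top (EReal.coe_ne_top (s₀ - t₀ / a)) <|
    hlsc.trans <| liminf_le_of_frequently_le' <|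
      (hbound.mono fun _ => EReal.coe_le_coe_iff.2).frequently
  obtain ⟨q, hq⟩ : ∃ q : ℝ, Ψ w = q := ⟨_, (EReal.coe_toReal hw_top (hΨ w)).symm⟩
  refine ⟨q, hq, tendsto_order.2 ⟨fun q' hq' => ?_, fun q' hq' => ?_⟩⟩
  · exact eventually_lt_of_coe_le_liminf (hq ▸ hlsc) hq'
  · have hvw := eventually_le_of_isCriticalPoint ha hμa hcrit hp hq (hliminf w)
      (t := (q - q') * a / 2) (by nlinarith) (by rw [sub_self, map_zero]; nlinarith)
    filter_upwards [hvw] with j hj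
    have : (q - q') * a / 2 / a = (q - q') / 2 := by field_simp
    linarith

lemma isCriticalPoint_of_tendsto (hlam : 0 < lam) (hΨ : ∀ x, Ψ x ≠ ⊥)
    (hcrit : ∀ j, IsCriticalPoint Ψ Φ (μ j) (v j)) (hp : ∀ j, Ψ (v j) = p j) (hq : Ψ w = q)
    (hpq : Tendsto p atTop (𝓝 q)) (hμ : Tendsto μ atTop (𝓝 lam))
    (hliminf : ∀ x, ((fderiv ℝ Φ w (x - w) : ℝ) : EReal) ≤
      liminf (fun j => ((fderiv ℝ Φ (v j) (x - v j) : ℝ) : EReal)) atTop) :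
    IsCriticalPoint Ψ Φ lam w := by
  refine isCriticalPoint_of_fderiv_le hlam hΨ hq fun x s hx => EReal.coe_le_coe_iff.1 ?_
  have hlim : Tendsto (fun j => ((μ j * (s - p j) : ℝ) : EReal)) atTop
      (𝓝 ((lam * (s - q) : ℝ) : EReal)) :=
    (continuous_coe_real_ereal.tendsto _).comp (hμ.mul (tendsto_const_nhds.sub hpq))
  rw [← hlim.liminf_eq]
  exact (hliminf x).trans <| liminf_le_liminf <| Eventually.of_forall fun j =>
    EReal.coe_le_coe_iff.2 ((hcrit j).fderiv_le (hp j) hx)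

end CriticalSequences

lemma ILam_le_of_tendsto {Y : Type*} [TopologicalSpace Y] {Ψ : Y → EReal} {Φ : Y → ℝ}
    {lam q c : ℝ} {μ p : ℕ → ℝ} {v : ℕ → Y} {w : Y} (hΦ : Continuous Φ)
    (hp : ∀ j, Ψ (v j) = p j) (hq : Ψ w = q) (hpq : Tendsto p atTop (𝓝 q))
    (hμ : Tendsto μ atTop (𝓝 lam)) (hv : Tendsto v atTop (𝓝 w))
    (hI : ∀ j, ILam Ψ Φ (μ j) (v j) ≤ c) : ILam Ψ Φ lam w ≤ c := by
  simp only [ILam, hp, hq, ← EReal.coe_mul, ← EReal.coe_sub, EReal.coe_le_coe_iff] at hI ⊢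
  exact le_of_tendsto' ((hμ.mul hpq).sub ((hΦ.tendsto w).comp hv)) hI

theorem critSet_compact_general
    (Ψ : X → EReal) (Φ : X → ℝ)
    -- (Ψ1)
    (hΨ0 : Ψ 0 = 0)
    (hΨnn : ∀ u : X, 0 ≤ Ψ u)
    (hΨlsc : LowerSemicontinuous Ψ)
    (hΨconv : ∀ u v : X, ∀ a b : ℝ, 0 ≤ a → 0 ≤ b → a + b = 1 →
      Ψ (a • u + b • v) ≤ (a : EReal) * Ψ u + (b : EReal) * Ψ v)
    -- (Ψ3)
    (hΨ3 : ∀ (u : ℕ → X) (w : X), (∀ j, Ψ (u j) ≠ ⊤) → Ψ w ≠ ⊤ →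
      (∀ f : X →L[ℝ] ℝ, Tendsto (fun j => f (u j)) atTop (𝓝 (f w))) →
      Tendsto (fun j => Ψ (u j)) atTop (𝓝 (Ψ w)) →
      Tendsto (fun j => ‖u j - w‖) atTop (𝓝 0))
    -- (Φ1)
    (hΦ : ContDiff ℝ 1 Φ)
    -- (Φ2)
    (hΦ2 : ∀ u : ℕ → X, IsBounded (range u) →
      ∃ (φ : ℕ → ℕ) (w : X), StrictMono φ ∧
        (∀ f : X →L[ℝ] ℝ, Tendsto (fun j => f (u (φ j))) atTop (𝓝 (f w))) ∧
        ∀ v : X, ((fderiv ℝ Φ w (v - w) : ℝ) : EReal) ≤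
          Filter.liminf
            (fun j => ((fderiv ℝ Φ (u (φ j)) (v - u (φ j)) : ℝ) : EReal)) atTop)
    -- (IB)
    (hIB : ∀ a b c : ℝ, 0 < a → a ≤ b → IsBounded (critSet Ψ Φ a b c)) :
    ∀ a b c : ℝ, 0 < a → a ≤ b → IsCompact (critSet Ψ Φ a b c) := by
  intro a b c ha hab
  have hΨbot : ∀ u, Ψ u ≠ ⊥ := fun u => ne_bot_of_le_ne_bot EReal.zero_ne_bot (hΨnn u)
  refine IsSeqCompact.isCompact fun u hu => ?_
  choose lam hlam hcrit hI using hu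
  obtain ⟨lam₀, hlam₀, φ₁, hφ₁, hlim⟩ := isCompact_Icc.tendsto_subseq hlam
  obtain ⟨φ₂, w, hφ₂, hweak, hliminf⟩ := hΦ2 (u ∘ φ₁) <| (hIB a b c ha hab).subset <|
    range_subset_iff.2 fun n => ⟨_, hlam _, hcrit _, hI _⟩
  set ψ := φ₁ ∘ φ₂
  have hμa : ∀ j, a ≤ lam (ψ j) := fun j => (hlam _).1
  have hμ : Tendsto (lam ∘ ψ) atTop (𝓝 lam₀) := hlim.comp hφ₂.tendsto_atTop
  obtain ⟨p, hp⟩ : ∃ p : ℕ → ℝ, ∀ j, Ψ (u (ψ j)) = p j := ⟨_, fun j =>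
    (EReal.coe_toReal ((hcrit _).ne_top (ha.trans_le (hμa j))) (hΨbot _)).symm⟩
  obtain ⟨q, hq, hpq⟩ := exists_tendsto_of_isCriticalPoint hΨconv hΨlsc hΨbot
    (hΨ0.trans EReal.coe_zero.symm) ha hμa (fun j => hcrit _) hp hweak hliminf
  have hconv : Tendsto (u ∘ ψ) atTop (𝓝 w) := by
    refine tendsto_iff_norm_sub_tendsto_zero.2 <| hΨ3 _ w (fun j => hp j ▸ EReal.coe_ne_top _)
      (hq ▸ EReal.coe_ne_top _) hweak ?_
    simpa only [Function.comp_def, hp, hq] using (continuous_coe_real_ereal.tendsto q).comp hpq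
  refine ⟨w, ⟨lam₀, hlam₀, ?_, ?_⟩, ψ, hφ₁.comp hφ₂, hconv⟩
  · exact isCriticalPoint_of_tendsto (ha.trans_le hlam₀.1) hΨbot (fun j => hcrit _) hp hq hpq
      hμ hliminf
  · exact ILam_le_of_tendsto hΦ.continuous hp hq hpq hμ hconv fun j => hI _

theorem critSet_compact
    [CompleteSpace X]
    (Ψ : X → EReal) (Φ : X → ℝ)
    -- (Ψ1)
    (hΨ0 : Ψ 0 = 0)
    (hΨnn : ∀ u : X, 0 ≤ Ψ u)
    (hΨlsc : LowerSemicontinuous Ψ)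
    (hΨconv : ∀ u v : X, ∀ a b : ℝ, 0 ≤ a → 0 ≤ b → a + b = 1 →
      Ψ (a • u + b • v) ≤ (a : EReal) * Ψ u + (b : EReal) * Ψ v)
    -- (Ψ3)
    (hΨ3 : ∀ (u : ℕ → X) (w : X), (∀ j, Ψ (u j) ≠ ⊤) → Ψ w ≠ ⊤ →
      (∀ f : X →L[ℝ] ℝ, Tendsto (fun j => f (u j)) atTop (𝓝 (f w))) →
      Tendsto (fun j => Ψ (u j)) atTop (𝓝 (Ψ w)) →
      Tendsto (fun j => ‖u j - w‖) atTop (𝓝 0))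
    -- (Φ1)
    (hΦ : ContDiff ℝ 1 Φ)
    -- (Φ2)
    (hΦ2 : ∀ u : ℕ → X, IsBounded (range u) →
      ∃ (φ : ℕ → ℕ) (w : X), StrictMono φ ∧
        (∀ f : X →L[ℝ] ℝ, Tendsto (fun j => f (u (φ j))) atTop (𝓝 (f w))) ∧
        ∀ v : X, ((fderiv ℝ Φ w (v - w) : ℝ) : EReal) ≤
          Filter.liminf
            (fun j => ((fderiv ℝ Φ (u (φ j)) (v - u (φ j)) : ℝ) : EReal)) atTop)
    -- (IB)
    (hIB : ∀ a b c : ℝ, 0 < a → a ≤ b → IsBounded (critSet Ψ Φ a b c)) :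
    ∀ a b c : ℝ, 0 < a → a ≤ b → IsCompact (critSet Ψ Φ a b c) :=
  critSet_compact_general Ψ Φ hΨ0 hΨnn hΨlsc hΨconv hΨ3 hΦ hΦ2 hIB

end
end

section
/- (Deformation Lemma.) Suppose (Ψ1) and (Φ1) hold. Fix λ > 0, let A ⊂ X be closed and bounded, and for c ∈ ℝ, σ > 0 set 𝒜 := A ∩ {c − 3σ ≤ I_λ ≤ c + 3σ}. Assume there exists δ₀ > 0 such that for each u ∈ 𝒜 there is v = v(u) ∈ X \ {u} with λ(Ψ(v) − Ψ(u)) − Φ'(u)(v − u) < −5δ₀‖v − u‖. Then for every set K ⊂ 𝒜 which is relatively compact in X, there exist open sets W, W̃ with cl(K) ⊂ W ⊂ cl(W) ⊂ W̃, a number s₀ > 0 and a continuous map η : [0,∞) × X → X such that: (i) ‖η(s,w) − w‖ ≤ s for all (s,w) ∈ [0,∞) × X, and η(s,w) = w for all s ≥ 0 whenever w ∉ W̃; (ii) I_λ(η(s,w)) ≤ I_λ(w) + δ₀ s for all (s,w) ∈ [0,s₀] × X; (iii) I_λ(η(s,w)) ≤ I_λ(w) − 2δ₀ s for all (s,w)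 ∈ [0,s₀] × W with I_λ(w) ≥ c − σ. -/
/-!
Every point `x` of the compact set `closure K` carries a *descent chart*: a ball `B(x, r)`, a
target `v` and a scale `R ≥ r` such that for every `w` in the ball, stepping from `w` towards `v`
raises `I_λ` to first order by at most `3δ₀/4` per unit of time, and lowers it by `3δ₀` wherever
`I_λ(w) ≥ c − σ`. Near points of `𝒜` with `I_λ ≥ c − 2σ`, `v` is the given descent direction and
the strict inequality spreads to a ball by lower semicontinuity of `Ψ` and continuity of `Φ'`;
near points with `I_λ < c − 2σ` the trivial target `v = x` works.

Finitely many balls `B(x, r/3)` cover `closure K`; a subordinate partition of unity `πᵢ` glues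
the charts into `η(s, w) = w + ∑ πᵢ(w) (s / Rᵢ) (vᵢ − w)`. For `s ≤ Rᵢ`, `η(s, w)` is a convex
combination of `w` and the `vᵢ`, so convexity of `Ψ` bounds `Ψ(η)`; for `s ≤ rᵢ/2` the segment
from `w` to `η(s, w)` stays where `Φ'` varies by at most `δ₀/4`, so `Φ(η)` is within `δ₀ s / 4` of
its linearisation. Summing the chart estimates with the weights `πᵢ` gives (ii) and (iii).
-/

open Set Filter Metric Bornology Topology

noncomputable section

variable {X : Type*} [NormedAddCommGroup X] [NormedSpace ℝ X]

section Jensen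

variable {E ι : Type*} [AddCommGroup E] [Module ℝ E] {D : Set E} (t : Finset ι) {θ : ι → ℝ}
  {p : ι → E} {w : E}

lemma add_sum_smul_sub_eq_sum_insertNone :
    w + ∑ i ∈ t, θ i • (p i - w) =
      ∑ o ∈ t.insertNone, (o.elim (1 - ∑ i ∈ t, θ i) θ) • o.elim w p := by
  simp only [Finset.sum_insertNone, Option.elim_none, Option.elim_some, smul_sub,
    Finset.sum_sub_distrib, ← Finset.sum_smul, sub_smul, one_smul]
  abel

lemma insertNone_weights_nonneg (hθ : ∀ i ∈ t, 0 ≤ θ i) (hθ1 : ∑ i ∈ t, θ i ≤ 1) :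
    ∀ o ∈ t.insertNone, 0 ≤ o.elim (1 - ∑ i ∈ t, θ i) θ := by
  rintro (_ | i) hi
  · simpa using hθ1
  · exact hθ i (Finset.some_mem_insertNone.1 hi)

lemma Convex.add_sum_smul_sub_mem (hD : Convex ℝ D) (hθ : ∀ i ∈ t, 0 ≤ θ i)
    (hθ1 : ∑ i ∈ t, θ i ≤ 1) (hw : w ∈ D) (hp : ∀ i ∈ t, p i ∈ D) :
    w + ∑ i ∈ t, θ i • (p i - w) ∈ D := by
  rw [add_sum_smul_sub_eq_sum_insertNone]
  refine hD.sum_mem (insertNone_weights_nonneg t hθ hθ1) (by simp [Finset.sum_insertNone]) ?_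
  rintro (_ | i) hi
  · exact hw
  · exact hp i (Finset.some_mem_insertNone.1 hi)

lemma ConvexOn.map_add_sum_smul_sub_le {f : E → ℝ} (hf : ConvexOn ℝ D f)
    (hθ : ∀ i ∈ t, 0 ≤ θ i) (hθ1 : ∑ i ∈ t, θ i ≤ 1) (hw : w ∈ D) (hp : ∀ i ∈ t, p i ∈ D) :
    f (w + ∑ i ∈ t, θ i • (p i - w)) ≤ f w + ∑ i ∈ t, θ i * (f (p i) - f w) := by
  rw [add_sum_smul_sub_eq_sum_insertNone]
  refine (hf.map_sum_le (insertNone_weights_nonneg t hθ hθ1) (by simp [Finset.sum_insertNone])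
    ?_).trans_eq ?_
  · rintro (_ | i) hi
    · exact hw
    · exact hp i (Finset.some_mem_insertNone.1 hi)
  · simp only [Finset.sum_insertNone, Option.elim_none, Option.elim_some, smul_eq_mul, mul_sub,
      Finset.sum_sub_distrib, ← Finset.sum_mul, sub_mul, one_mul]
    ring

end Jensen

lemma convexOn_toReal_of_ereal {E : Type*} [AddCommGroup E] [Module ℝ E] {Ψ : E → EReal}
    (hΨbot : ∀ u, Ψ u ≠ ⊥)
    (hΨconv : ∀ u v : E, ∀ a b : ℝ, 0 ≤ a → 0 ≤ b → a + b = 1 →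
      Ψ (a • u + b • v) ≤ (a : EReal) * Ψ u + (b : EReal) * Ψ v) :
    ConvexOn ℝ {u | Ψ u ≠ ⊤} (fun u => (Ψ u).toReal) := by
  have hcoe : ∀ u, Ψ u ≠ ⊤ → (((Ψ u).toReal : ℝ) : EReal) = Ψ u := fun u hu =>
    EReal.coe_toReal hu (hΨbot u)
  have key : ∀ u, Ψ u ≠ ⊤ → ∀ v, Ψ v ≠ ⊤ → ∀ a b : ℝ, 0 ≤ a → 0 ≤ b → a + b = 1 →
      Ψ (a • u + b • v) ≤ ((a * (Ψ u).toReal + b * (Ψ v).toReal : ℝ) : EReal) := by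
    intro u hu v hv a b ha hb hab
    have h := hΨconv u v a b ha hb hab
    rw [← hcoe u hu, ← hcoe v hv] at h
    exact_mod_cast h
  refine ⟨fun u hu v hv a b ha hb hab => ne_top_of_le_ne_top (EReal.coe_ne_top _)
    (key u hu v hv a b ha hb hab), fun u hu v hv a b ha hb hab => ?_⟩
  have h := key u hu v hv a b ha hb hab
  rw [← hcoe _ (ne_top_of_le_ne_top (EReal.coe_ne_top _) h)] at h
  exact_mod_cast h

section Functional

variable {E : Type*} {Ψ : E → EReal} {Φ : E → ℝ} {lam : ℝ} {u : E}

lemma ILam_eq_top (hlam : 0 < lam) (h : Ψ u = ⊤) : ILam Ψ Φ lam u = ⊤ := by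
  rw [ILam, h, EReal.coe_mul_top_of_pos hlam, EReal.top_sub_coe]

lemma ILam_eq_coe (hbot : Ψ u ≠ ⊥) (htop : Ψ u ≠ ⊤) :
    ILam Ψ Φ lam u = ((lam * (Ψ u).toReal - Φ u : ℝ) : EReal) := by
  rw [ILam, ← EReal.coe_toReal htop hbot]
  norm_cast

lemma Ψ_ne_top_of_ILam_le (hlam : 0 < lam) {y : ℝ} (h : ILam Ψ Φ lam u ≤ (y : EReal)) :
    Ψ u ≠ ⊤ := fun ht => by
  rw [ILam_eq_top hlam ht, top_le_iff] at h
  exact EReal.coe_ne_top y h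

lemma lowerSemicontinuous_ILam [TopologicalSpace E] (hΨ : LowerSemicontinuous Ψ)
    (hΦ : Continuous Φ) (hlam : 0 < lam) : LowerSemicontinuous (ILam Ψ Φ lam) := by
  have hlam' : (lam : EReal) ≠ 0 := by exact_mod_cast hlam.ne'
  have hmul : Continuous fun y : EReal => (lam : EReal) * y :=
    continuous_iff_continuousAt.2 fun y =>
      (EReal.continuousAt_mul (p := ((lam : EReal), y)) (.inl hlam') (.inl hlam') (by simp)
        (by simp)).comp (Continuous.prodMk_right (lam : EReal)).continuousAt
  have hneg : LowerSemicontinuous fun u => -((Φ u : ℝ) : EReal) :=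
    (continuous_neg.comp (continuous_coe_real_ereal.comp hΦ)).lowerSemicontinuous
  exact (hmul.comp_lowerSemicontinuous hΨ fun _ _ h =>
    mul_le_mul_of_nonneg_left h (by exact_mod_cast hlam.le)).add' hneg
    fun u => EReal.continuousAt_add (by simp) (by simp)

end Functional

/-- Real form of `λ(Ψ(v) − Ψ(u)) − Φ'(u)(v − u)`, the first-order change of `I_λ` from `u`
towards `v`; meaningful only where `Ψ u` and `Ψ v` are finite. -/
def descentGap (Ψ : X → EReal) (Φ : X → ℝ) (lam : ℝ) (u v : X) : ℝ :=
  lam * ((Ψ v).toReal - (Ψ u).toReal) - fderiv ℝ Φ u (v - u)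

section DescentGap

variable {Ψ : X → EReal} {Φ : X → ℝ} {lam : ℝ}

lemma descentGap_lt_of_ereal_lt (hlam : 0 < lam) {u v : X} (hu0 : Ψ u ≠ ⊥) (hu : Ψ u ≠ ⊤)
    (hv0 : Ψ v ≠ ⊥) {b : ℝ}
    (h : (lam : EReal) * (Ψ v - Ψ u) - ((fderiv ℝ Φ u (v - u) : ℝ) : EReal) < (b : EReal)) :
    Ψ v ≠ ⊤ ∧ descentGap Ψ Φ lam u v < b := by
  rw [← EReal.coe_toReal hu hu0] at h
  have hv : Ψ v ≠ ⊤ := by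
    rintro hv
    rw [hv, EReal.top_sub_coe, EReal.coe_mul_top_of_pos hlam, EReal.top_sub_coe] at h
    exact not_top_lt h
  rw [← EReal.coe_toReal hv hv0] at h
  exact ⟨hv, by exact_mod_cast h⟩

lemma eventually_descentGap_lt (hΨ : LowerSemicontinuous Ψ) (hΦ : ContDiff ℝ 1 Φ)
    (hlam : 0 < lam) {x v : X} (hx : Ψ x ≠ ⊥) {b : ℝ}
    (h : descentGap Ψ Φ lam x v < b) :
    ∀ᶠ w in 𝓝 x, Ψ w ≠ ⊤ → descentGap Ψ Φ lam w v < b := by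
  set ε := (b - descentGap Ψ Φ lam x v) / (lam + 1)
  have hε : 0 < ε := div_pos (sub_pos.2 h) (by linarith)
  have hΨlow : ∀ᶠ w in 𝓝 x, (((Ψ x).toReal - ε : ℝ) : EReal) < Ψ w :=
    hΨ x _ ((EReal.coe_lt_coe_iff.2 (sub_lt_self _ hε)).trans_le
      (EReal.coe_toReal_le hx))
  have hderiv : ∀ᶠ w in 𝓝 x, fderiv ℝ Φ x (v - x) - ε < fderiv ℝ Φ w (v - w) :=
    continuousAt_const.eventually_lt ((hΦ.continuous_fderiv one_ne_zero).clm_apply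
      (continuous_const.sub continuous_id)).continuousAt (sub_lt_self _ hε)
  filter_upwards [hΨlow, hderiv] with w hw hdw hwtop
  have hψw : (Ψ x).toReal - ε < (Ψ w).toReal :=
    EReal.coe_lt_coe_iff.1 (hw.trans_le (EReal.le_coe_toReal hwtop))
  have hb : b = descentGap Ψ Φ lam x v + (lam + 1) * ε := by
    simp only [ε]; field_simp; ring
  rw [hb]
  unfold descentGap
  nlinarith

end DescentGap

lemma exists_forall_closedBall_of_eventually {α : Type*} [PseudoMetricSpace α] {x : α}
    {p : α → Prop} (h : ∀ᶠ w in 𝓝 x, p w)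
    {ρ : ℝ} (hρ : 0 < ρ) : ∃ r, 0 < r ∧ r ≤ ρ ∧ ∀ w ∈ closedBall x r, p w := by
  obtain ⟨ε, hε, hεp⟩ := nhds_basis_closedBall.eventually_iff.1 h
  exact ⟨min ε ρ, lt_min hε hρ, min_le_right _ _,
    fun w hw => hεp (closedBall_subset_closedBall (min_le_left _ _) hw)⟩

lemma eventually_norm_fderiv_sub_lt {Φ : X → ℝ} (hΦ : ContDiff ℝ 1 Φ) (x : X) {ε : ℝ}
    (hε : 0 < ε) : ∀ᶠ w in 𝓝 x, ‖fderiv ℝ Φ w - fderiv ℝ Φ x‖ < ε := by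
  simpa only [← dist_eq_norm] using
    (hΦ.continuous_fderiv one_ne_zero).continuousAt.eventually (ball_mem_nhds _ hε)

/-- On `closedBall x r`, moving from `w` towards `v` at speed `1 / R` changes `I_λ` to first
order by at most `3δ₀/4` per unit time, and by at most `-3δ₀` at points where `I_λ ≥ ℓ`. -/
structure DescentChart (Ψ : X → EReal) (Φ : X → ℝ) (lam δ₀ ℓ : ℝ) (x : X) where
  v : X
  R : ℝ
  r : ℝ
  r_pos : 0 < r
  r_le : r ≤ R
  Ψ_v_ne_top : Ψ v ≠ ⊤
  norm_sub_le : ∀ w ∈ closedBall x r, ‖v - w‖ ≤ R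
  norm_fderiv_sub_le : ∀ w ∈ closedBall x r, ‖fderiv ℝ Φ w - fderiv ℝ Φ x‖ ≤ δ₀ / 8
  descentGap_le : ∀ w ∈ closedBall x r, Ψ w ≠ ⊤ → descentGap Ψ Φ lam w v ≤ 3 / 4 * δ₀ * R
  descentGap_le_of_le : ∀ w ∈ closedBall x r, Ψ w ≠ ⊤ → ℓ ≤ lam * (Ψ w).toReal - Φ w →
    descentGap Ψ Φ lam w v ≤ -(3 * δ₀ * R)

section Charts

variable {Ψ : X → EReal} {Φ : X → ℝ} {lam δ₀ : ℝ}

lemma DescentChart.R_pos {ℓ : ℝ} {x : X} (C : DescentChart Ψ Φ lam δ₀ ℓ x) : 0 < C.R :=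
  C.r_pos.trans_le C.r_le

lemma nonempty_descentChart_of_descentGap_lt (hΨ : LowerSemicontinuous Ψ)
    (hΦ : ContDiff ℝ 1 Φ) (hlam : 0 < lam) (hδ₀ : 0 < δ₀) (ℓ : ℝ) {x v : X} (hx : Ψ x ≠ ⊥)
    (hvx : v ≠ x) (hv : Ψ v ≠ ⊤) (hgap : descentGap Ψ Φ lam x v < -(5 * δ₀ * ‖v - x‖)) :
    Nonempty (DescentChart Ψ Φ lam δ₀ ℓ x) := by
  set ρ := ‖v - x‖
  have hρ : 0 < ρ := norm_pos_iff.2 (sub_ne_zero.2 hvx)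
  obtain ⟨r, hr, hrρ, hball⟩ := exists_forall_closedBall_of_eventually
    ((eventually_descentGap_lt hΨ hΦ hlam hx hgap).and
      (eventually_norm_fderiv_sub_lt hΦ x (by positivity : 0 < δ₀ / 8))) (half_pos hρ)
  refine ⟨⟨v, ρ + r, r, hr, by linarith, hv, fun w hw => ?_, fun w hw => (hball w hw).2.le,
    fun w hw hw' => ?_, fun w hw hw' _ => ?_⟩⟩
  · have := mem_closedBall'.1 hw
    rw [dist_eq_norm] at this
    linarith [norm_sub_le_norm_sub_add_norm_sub v x w]
  · have := (hball w hw).1 hw'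
    nlinarith
  · -- `r ≤ ρ / 2` makes `-5δ₀ρ ≤ -3δ₀(ρ + r)`
    have := (hball w hw).1 hw'
    nlinarith

/-- The chart with `v = x`: for `w` near `x`, `descentGap w x` is `I_λ(x) − I_λ(w)` up to the
small remainder `Φ(x) − Φ(w) − Φ'(w)(x − w)`, and `I_λ(x) < ℓ − σ`. -/
lemma nonempty_descentChart_of_lt (hΨ : LowerSemicontinuous Ψ) (hΦ : ContDiff ℝ 1 Φ)
    (hlam : 0 < lam) (hδ₀ : 0 < δ₀) {ℓ σ : ℝ} (hσ : 0 < σ) {x : X} (hxbot : Ψ x ≠ ⊥)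
    (hxtop : Ψ x ≠ ⊤) (hx : lam * (Ψ x).toReal - Φ x < ℓ - σ) :
    Nonempty (DescentChart Ψ Φ lam δ₀ ℓ x) := by
  set R := σ / (4 * δ₀)
  have hR : 0 < R := by positivity
  have hσR : σ = 4 * δ₀ * R := by simp only [R]; field_simp
  have hgap : descentGap Ψ Φ lam x x < 3 / 4 * δ₀ * R := by
    simp only [descentGap, sub_self, map_zero, mul_zero]; positivity
  have hrem : ∀ᶠ w in 𝓝 x, Φ x - Φ w - fderiv ℝ Φ w (x - w) < σ / 4 := by
    refine ContinuousAt.eventually_lt ?_ continuousAt_const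
      (by simp only [sub_self, map_zero]; positivity)
    exact (continuous_const.sub hΦ.continuous |>.sub ((hΦ.continuous_fderiv one_ne_zero).clm_apply
      (continuous_const.sub continuous_id))).continuousAt
  obtain ⟨r, hr, hrR, hball⟩ := exists_forall_closedBall_of_eventually
    (((eventually_descentGap_lt hΨ hΦ hlam hxbot hgap).and hrem).and
      (eventually_norm_fderiv_sub_lt hΦ x (by positivity : 0 < δ₀ / 8))) hR
  refine ⟨⟨x, R, r, hr, hrR, hxtop, fun w hw => ?_, fun w hw => (hball w hw).2.le,
    fun w hw hw' => ((hball w hw).1.1 hw').le, fun w hw hw' hℓ => ?_⟩⟩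
  · rw [← dist_eq_norm']
    exact (mem_closedBall.1 hw).trans hrR
  · have := (hball w hw).1.2
    simp only [descentGap]
    linarith

lemma DescentChart.abs_sub_sub_fderiv_le {ℓ : ℝ} {x : X} (C : DescentChart Ψ Φ lam δ₀ ℓ x)
    (hΦ : Differentiable ℝ Φ) {w y : X} (hw : w ∈ ball x (C.r / 2)) (hy : ‖y - w‖ ≤ C.r / 2) :
    |Φ y - Φ w - fderiv ℝ Φ w (y - w)| ≤ δ₀ / 4 * ‖y - w‖ := by
  have hw' : w ∈ closedBall x C.r :=
    closedBall_subset_closedBall (by linarith [C.r_pos]) (ball_subset_closedBall hw)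
  have hy' : y ∈ closedBall x C.r := by
    rw [mem_closedBall, dist_eq_norm]
    rw [mem_ball, dist_eq_norm] at hw
    linarith [norm_sub_le_norm_sub_add_norm_sub y w x]
  refine (convex_closedBall x C.r).norm_image_sub_le_of_norm_fderiv_le'
    (fun z _ => hΦ z) (fun z hz => ?_) hw' hy'
  calc ‖fderiv ℝ Φ z - fderiv ℝ Φ w‖
      ≤ ‖fderiv ℝ Φ z - fderiv ℝ Φ x‖ + ‖fderiv ℝ Φ w - fderiv ℝ Φ x‖ :=
        (norm_sub_le_norm_sub_add_norm_sub _ (fderiv ℝ Φ x) _).trans_eq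
          (by rw [norm_sub_rev (fderiv ℝ Φ x)])
    _ ≤ δ₀ / 4 := by linarith [C.norm_fderiv_sub_le z hz, C.norm_fderiv_sub_le w hw']

lemma nonempty_descentChart (hΨbot : ∀ u, Ψ u ≠ ⊥) (hΨ : LowerSemicontinuous Ψ)
    (hΦ : ContDiff ℝ 1 Φ) (hlam : 0 < lam) (hδ₀ : 0 < δ₀) {ℓ σ : ℝ} (hσ : 0 < σ) {x : X}
    (hx : Ψ x ≠ ⊤)
    (hdesc : ((ℓ - σ : ℝ) : EReal) ≤ ILam Ψ Φ lam x → ∃ v : X, v ≠ x ∧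
      (lam : EReal) * (Ψ v - Ψ x) - ((fderiv ℝ Φ x (v - x) : ℝ) : EReal) <
        ((-(5 * δ₀ * ‖v - x‖) : ℝ) : EReal)) :
    Nonempty (DescentChart Ψ Φ lam δ₀ ℓ x) := by
  by_cases hlev : ((ℓ - σ : ℝ) : EReal) ≤ ILam Ψ Φ lam x
  · obtain ⟨v, hvx, hv⟩ := hdesc hlev
    obtain ⟨hvtop, hgap⟩ := descentGap_lt_of_ereal_lt hlam (hΨbot x) hx (hΨbot v) hv
    exact nonempty_descentChart_of_descentGap_lt hΨ hΦ hlam hδ₀ ℓ (hΨbot x) hvx hvtop hgap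
  · rw [ILam_eq_coe (hΨbot x) hx, not_le, EReal.coe_lt_coe_iff] at hlev
    exact nonempty_descentChart_of_lt hΨ hΦ hlam hδ₀ hσ (hΨbot x) hx hlev

end Charts

lemma PartitionOfUnity.sum_le_one_of_fintype {ι Y : Type*} [Fintype ι] [TopologicalSpace Y]
    {S : Set Y} (π : PartitionOfUnity ι Y S) (w : Y) : ∑ i, π i w ≤ 1 := by
  simpa only [finsum_eq_sum_of_fintype] using π.sum_le_one w

lemma PartitionOfUnity.sum_eq_one_of_fintype {ι Y : Type*} [Fintype ι] [TopologicalSpace Y]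
    {S : Set Y} (π : PartitionOfUnity ι Y S) {w : Y} (hw : w ∈ S) : ∑ i, π i w = 1 := by
  simpa only [finsum_eq_sum_of_fintype] using π.sum_eq_one hw

section Deformation

variable {Ψ : X → EReal} {Φ : X → ℝ} {lam δ₀ ℓ : ℝ} {ι : Type*} {x : ι → X}
  {C : ∀ i, DescentChart Ψ Φ lam δ₀ ℓ (x i)} {S : Set X} {π : PartitionOfUnity ι X S}

lemma mem_ball_of_partition_ne_zero (hπ : π.IsSubordinate fun i => ball (x i) ((C i).r / 2))
    {i : ι} {w : X} (h : π i w ≠ 0) : w ∈ ball (x i) ((C i).r / 2) :=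
  hπ i (subset_tsupport _ h)

lemma mem_closedBall_of_partition_ne_zero
    (hπ : π.IsSubordinate fun i => ball (x i) ((C i).r / 2)) {i : ι} {w : X} (h : π i w ≠ 0) :
    w ∈ closedBall (x i) (C i).r :=
  closedBall_subset_closedBall (by linarith [(C i).r_pos])
    (ball_subset_closedBall (mem_ball_of_partition_ne_zero hπ h))

lemma norm_smul_chart_sub_le (hπ : π.IsSubordinate fun i => ball (x i) ((C i).r / 2)) (i : ι)
    {s : ℝ} (hs : 0 ≤ s) (w : X) : ‖(π i w * (s / (C i).R)) • ((C i).v - w)‖ ≤ π i w * s := by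
  by_cases h : π i w = 0
  · simp [h]
  have hw := (C i).norm_sub_le w (mem_closedBall_of_partition_ne_zero hπ h)
  have hR := (C i).R_pos
  have hθ : 0 ≤ π i w * (s / (C i).R) := mul_nonneg (π.nonneg i w) (by positivity)
  rw [norm_smul, Real.norm_of_nonneg hθ]
  calc π i w * (s / (C i).R) * ‖(C i).v - w‖ ≤ π i w * (s / (C i).R) * (C i).R := by gcongr
    _ = π i w * s := by field_simp

variable [Fintype ι]

variable (C π) in
def chartDeformation (s : ℝ) (w : X) : X :=
  w + ∑ i, (π i w * (s / (C i).R)) • ((C i).v - w)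

lemma continuous_chartDeformation :
    Continuous fun p : ℝ × X => chartDeformation C π p.1 p.2 := by
  unfold chartDeformation
  have := fun i => (π i).continuous
  fun_prop

lemma norm_chartDeformation_sub_le (hπ : π.IsSubordinate fun i => ball (x i) ((C i).r / 2))
    {s : ℝ} (hs : 0 ≤ s) (w : X) : ‖chartDeformation C π s w - w‖ ≤ s :=
  calc ‖chartDeformation C π s w - w‖
      ≤ ∑ i, ‖(π i w * (s / (C i).R)) • ((C i).v - w)‖ := by
        rw [chartDeformation, add_sub_cancel_left]; exact norm_sum_le _ _
    _ ≤ ∑ i, π i w * s := Finset.sum_le_sum fun i _ => norm_smul_chart_sub_le hπ i hs w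
    _ ≤ s := by
        rw [← Finset.sum_mul]
        exact mul_le_of_le_one_left hs (π.sum_le_one_of_fintype w)

lemma chartDeformation_eq_self (hπ : π.IsSubordinate fun i => ball (x i) ((C i).r / 2))
    (s : ℝ) {w : X} (hw : w ∉ ⋃ i, ball (x i) ((C i).r / 2)) : chartDeformation C π s w = w := by
  have h0 : ∀ i, π i w = 0 := fun i => by
    by_contra h
    exact hw (mem_iUnion.2 ⟨i, mem_ball_of_partition_ne_zero hπ h⟩)
  simp [chartDeformation, h0]

lemma toReal_Ψ_chartDeformation_le (hψ : ConvexOn ℝ {u | Ψ u ≠ ⊤} fun u => (Ψ u).toReal)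
    {s : ℝ} (hs : 0 ≤ s) (hsR : ∀ i, s ≤ (C i).R) {w : X} (hw : Ψ w ≠ ⊤) :
    Ψ (chartDeformation C π s w) ≠ ⊤ ∧ (Ψ (chartDeformation C π s w)).toReal ≤
      (Ψ w).toReal + ∑ i, π i w * (s / (C i).R) * ((Ψ (C i).v).toReal - (Ψ w).toReal) := by
  have hθ : ∀ i ∈ Finset.univ, 0 ≤ π i w * (s / (C i).R) := fun i _ =>
    mul_nonneg (π.nonneg i w) (div_nonneg hs (C i).R_pos.le)
  have hθ1 : ∑ i, π i w * (s / (C i).R) ≤ 1 :=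
    (Finset.sum_le_sum fun i _ => mul_le_of_le_one_right (π.nonneg i w)
      ((div_le_one (C i).R_pos).2 (hsR i))).trans (π.sum_le_one_of_fintype w)
  exact ⟨hψ.1.add_sum_smul_sub_mem _ hθ hθ1 hw fun i _ => (C i).Ψ_v_ne_top,
    hψ.map_add_sum_smul_sub_le _ hθ hθ1 hw fun i _ => (C i).Ψ_v_ne_top⟩

lemma sub_le_Φ_chartDeformation (hΦ : Differentiable ℝ Φ) (hδ₀ : 0 ≤ δ₀)
    (hπ : π.IsSubordinate fun i => ball (x i) ((C i).r / 2)) {s : ℝ} (hs : 0 ≤ s)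
    (hsr : ∀ i, s ≤ (C i).r / 2) (w : X) :
    Φ w + fderiv ℝ Φ w (chartDeformation C π s w - w) - δ₀ / 4 * s ≤
      Φ (chartDeformation C π s w) := by
  set y := chartDeformation C π s w
  have hy : ‖y - w‖ ≤ s := norm_chartDeformation_sub_le hπ hs w
  by_cases h : ∃ i, π i w ≠ 0
  · obtain ⟨i, hi⟩ := h
    have hmv := (C i).abs_sub_sub_fderiv_le hΦ (mem_ball_of_partition_ne_zero hπ hi)
      (hy.trans (hsr i))
    have : δ₀ / 4 * ‖y - w‖ ≤ δ₀ / 4 * s := by gcongr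
    linarith [(abs_le.1 hmv).1]
  · simp only [not_exists, not_not] at h
    have hyw : y = w := by simp [y, chartDeformation, h]
    rw [hyw, sub_self, map_zero]
    nlinarith

lemma ILam_chartDeformation_le (hΨbot : ∀ u, Ψ u ≠ ⊥)
    (hψ : ConvexOn ℝ {u | Ψ u ≠ ⊤} fun u => (Ψ u).toReal) (hΦ : Differentiable ℝ Φ)
    (hlam : 0 ≤ lam) (hδ₀ : 0 ≤ δ₀) (hπ : π.IsSubordinate fun i => ball (x i) ((C i).r / 2))
    {s : ℝ} (hs : 0 ≤ s) (hsr : ∀ i, s ≤ (C i).r / 2) {w : X} (hw : Ψ w ≠ ⊤) {κ : ℝ}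
    (hκ : ∀ i, π i w ≠ 0 → descentGap Ψ Φ lam w (C i).v ≤ κ * (C i).R) :
    ILam Ψ Φ lam (chartDeformation C π s w) ≤
      ((lam * (Ψ w).toReal - Φ w + κ * s * ∑ i, π i w + δ₀ / 4 * s : ℝ) : EReal) := by
  set θ := fun i => π i w * (s / (C i).R)
  obtain ⟨htop, hΨle⟩ := toReal_Ψ_chartDeformation_le hψ hs
    (fun i => by linarith [hsr i, (C i).r_pos, (C i).r_le]) hw
  have hΦle := sub_le_Φ_chartDeformation hΦ hδ₀ hπ hs hsr w
  have hgap : ∑ i, θ i * descentGap Ψ Φ lam w (C i).v =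
      lam * ∑ i, θ i * ((Ψ (C i).v).toReal - (Ψ w).toReal) -
        fderiv ℝ Φ w (chartDeformation C π s w - w) := by
    simp only [chartDeformation, add_sub_cancel_left, map_sum, map_smul, smul_eq_mul,
      Finset.mul_sum, ← Finset.sum_sub_distrib, descentGap]
    exact Finset.sum_congr rfl fun i _ => by ring
  have hgap_le : ∑ i, θ i * descentGap Ψ Φ lam w (C i).v ≤ κ * s * ∑ i, π i w := by
    rw [Finset.mul_sum]
    refine Finset.sum_le_sum fun i _ => ?_
    by_cases h : π i w = 0
    · simp [θ, h]
    calc θ i * descentGap Ψ Φ lam w (C i).v ≤ θ i * (κ * (C i).R) :=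
          mul_le_mul_of_nonneg_left (hκ i h)
            (mul_nonneg (π.nonneg i w) (div_nonneg hs (C i).R_pos.le))
      _ = κ * s * π i w := by simp only [θ]; field_simp [(C i).R_pos.ne']
  rw [ILam_eq_coe (hΨbot _) htop, EReal.coe_le_coe_iff]
  nlinarith [mul_le_mul_of_nonneg_left hΨle hlam]

lemma ILam_chartDeformation_le_add (hΨbot : ∀ u, Ψ u ≠ ⊥)
    (hψ : ConvexOn ℝ {u | Ψ u ≠ ⊤} fun u => (Ψ u).toReal) (hΦ : Differentiable ℝ Φ)
    (hlam : 0 < lam) (hδ₀ : 0 ≤ δ₀) (hπ : π.IsSubordinate fun i => ball (x i) ((C i).r / 2))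
    {s : ℝ} (hs : 0 ≤ s) (hsr : ∀ i, s ≤ (C i).r / 2) (w : X) :
    ILam Ψ Φ lam (chartDeformation C π s w) ≤ ILam Ψ Φ lam w + ((δ₀ * s : ℝ) : EReal) := by
  by_cases hw : Ψ w = ⊤
  · rw [ILam_eq_top hlam hw, EReal.top_add_coe]
    exact le_top
  refine (ILam_chartDeformation_le hΨbot hψ hΦ hlam.le hδ₀ hπ hs hsr hw (κ := 3 / 4 * δ₀)
    fun i hi => (C i).descentGap_le w (mem_closedBall_of_partition_ne_zero hπ hi) hw).trans ?_
  rw [ILam_eq_coe (hΨbot w) hw, ← EReal.coe_add, EReal.coe_le_coe_iff]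
  nlinarith [mul_nonneg (mul_nonneg hδ₀ hs) (sub_nonneg.2 (π.sum_le_one_of_fintype w))]

lemma ILam_chartDeformation_le_sub (hΨbot : ∀ u, Ψ u ≠ ⊥)
    (hψ : ConvexOn ℝ {u | Ψ u ≠ ⊤} fun u => (Ψ u).toReal) (hΦ : Differentiable ℝ Φ)
    (hlam : 0 < lam) (hδ₀ : 0 ≤ δ₀) (hπ : π.IsSubordinate fun i => ball (x i) ((C i).r / 2))
    {s : ℝ} (hs : 0 ≤ s) (hsr : ∀ i, s ≤ (C i).r / 2) {w : X} (hwS : w ∈ S)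
    (hℓ : (ℓ : EReal) ≤ ILam Ψ Φ lam w) :
    ILam Ψ Φ lam (chartDeformation C π s w) ≤ ILam Ψ Φ lam w - ((2 * δ₀ * s : ℝ) : EReal) := by
  by_cases hw : Ψ w = ⊤
  · rw [ILam_eq_top hlam hw, EReal.top_sub_coe]
    exact le_top
  rw [ILam_eq_coe (hΨbot w) hw, EReal.coe_le_coe_iff] at hℓ
  have hκ (i : ι) (hi : π i w ≠ 0) : descentGap Ψ Φ lam w (C i).v ≤ -(3 * δ₀) * (C i).R := by
    rw [neg_mul]
    exact (C i).descentGap_le_of_le w (mem_closedBall_of_partition_ne_zero hπ hi) hw hℓ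
  refine (ILam_chartDeformation_le hΨbot hψ hΦ hlam.le hδ₀ hπ hs hsr hw hκ).trans ?_
  rw [ILam_eq_coe (hΨbot w) hw, ← EReal.coe_sub, EReal.coe_le_coe_iff,
    π.sum_eq_one_of_fintype hwS]
  nlinarith [mul_nonneg hδ₀ hs]

end Deformation

lemma exists_pos_forall_le_of_finite {ι : Type*} [Finite ι] {f : ι → ℝ} (hf : ∀ i, 0 < f i) :
    ∃ ε > 0, ∀ i, ε ≤ f i := by
  cases isEmpty_or_nonempty ι
  · exact ⟨1, one_pos, isEmptyElim⟩
  · obtain ⟨i₀, hi₀⟩ := Finite.exists_min f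
    exact ⟨f i₀, hf i₀, hi₀⟩

lemma closure_iUnion_ball_subset {α ι : Type*} [PseudoMetricSpace α] [Finite ι] (x : ι → α)
    (ρ : ι → ℝ) : closure (⋃ i, ball (x i) (ρ i)) ⊆ ⋃ i, closedBall (x i) (ρ i) := by
  rw [closure_iUnion_of_finite]
  exact iUnion_mono fun i => closure_ball_subset_closedBall

theorem deformation_lemma_general
    (Ψ : X → EReal) (Φ : X → ℝ)
    -- (Ψ1)
    (hΨnn : ∀ u : X, 0 ≤ Ψ u)
    (hΨlsc : LowerSemicontinuous Ψ)
    (hΨconv : ∀ u v : X, ∀ a b : ℝ, 0 ≤ a → 0 ≤ b → a + b = 1 →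
      Ψ (a • u + b • v) ≤ (a : EReal) * Ψ u + (b : EReal) * Ψ v)
    -- (Φ1)
    (hΦ : ContDiff ℝ 1 Φ)
    -- the data
    (lam : ℝ) (hlam : 0 < lam)
    (A : Set X) (hAclosed : IsClosed A)
    (c σ : ℝ) (hσ : 0 < σ)
    (δ₀ : ℝ) (hδ₀ : 0 < δ₀)
    -- on 𝒜 = A ∩ {c − 3σ ≤ I_λ ≤ c + 3σ} there are strictly descent directions
    (hdesc : ∀ u ∈ A ∩ {w : X | ((c - 3 * σ : ℝ) : EReal) ≤ ILam Ψ Φ lam w ∧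
        ILam Ψ Φ lam w ≤ ((c + 3 * σ : ℝ) : EReal)},
      ∃ v : X, v ≠ u ∧
        (lam : EReal) * (Ψ v - Ψ u) - ((fderiv ℝ Φ u (v - u) : ℝ) : EReal) <
          ((-(5 * δ₀ * ‖v - u‖) : ℝ) : EReal))
    -- K ⊂ 𝒜 relatively compact
    (K : Set X)
    (hK : K ⊆ A ∩ {w : X | ((c - 3 * σ : ℝ) : EReal) ≤ ILam Ψ Φ lam w ∧
        ILam Ψ Φ lam w ≤ ((c + 3 * σ : ℝ) : EReal)})
    (hKcomp : IsCompact (closure K)) :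
    ∃ (W W' : Set X), IsOpen W ∧ IsOpen W' ∧
      closure K ⊆ W ∧ closure W ⊆ W' ∧
      ∃ s₀ : ℝ, 0 < s₀ ∧ ∃ η : ℝ → X → X,
        ContinuousOn (fun p : ℝ × X => η p.1 p.2) (Ici 0 ×ˢ univ) ∧
        -- (i)
        (∀ s ∈ Ici (0 : ℝ), ∀ w : X, ‖η s w - w‖ ≤ s) ∧
        (∀ s ∈ Ici (0 : ℝ), ∀ w : X, w ∉ W' → η s w = w) ∧
        -- (ii)
        (∀ s ∈ Icc 0 s₀, ∀ w : X,
          ILam Ψ Φ lam (η s w) ≤ ILam Ψ Φ lam w + ((δ₀ * s : ℝ) : EReal)) ∧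
        -- (iii)
        (∀ s ∈ Icc 0 s₀, ∀ w ∈ W, ((c - σ : ℝ) : EReal) ≤ ILam Ψ Φ lam w →
          ILam Ψ Φ lam (η s w) ≤ ILam Ψ Φ lam w - ((2 * δ₀ * s : ℝ) : EReal)) := by
  have hΨbot : ∀ u, Ψ u ≠ ⊥ := fun u => ne_bot_of_le_ne_bot EReal.zero_ne_bot (hΨnn u)
  have hclK : closure K ⊆ A ∩ ILam Ψ Φ lam ⁻¹' Iic ((c + 3 * σ : ℝ) : EReal) :=
    closure_minimal (fun u hu => ⟨(hK hu).1, (hK hu).2.2⟩) (hAclosed.inter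
      ((lowerSemicontinuous_ILam hΨlsc hΦ.continuous hlam).isClosed_preimage _))
  have chart : ∀ y : closure K, DescentChart Ψ Φ lam δ₀ (c - σ) y := fun y =>
    (nonempty_descentChart hΨbot hΨlsc hΦ hlam hδ₀ hσ
      (Ψ_ne_top_of_ILam_le hlam (hclK y.2).2) fun hlev => hdesc y ⟨(hclK y.2).1,
        le_trans (EReal.coe_le_coe_iff.2 (by linarith)) hlev, (hclK y.2).2⟩).some
  obtain ⟨t, hcover⟩ := hKcomp.elim_finite_subcover
    (fun y : closure K => ball (y : X) ((chart y).r / 3)) (fun _ => isOpen_ball) fun y hy =>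
      mem_iUnion.2 ⟨⟨y, hy⟩, mem_ball_self (by linarith [(chart ⟨y, hy⟩).r_pos])⟩
  set C := fun i : t => chart i
  have hKW : closure K ⊆ ⋃ i : t, ball (i : X) ((C i).r / 3) := fun y hy => by
    obtain ⟨i, hi, hyi⟩ := mem_iUnion₂.1 (hcover hy)
    exact mem_iUnion.2 ⟨⟨i, hi⟩, hyi⟩
  have hS : ⋃ i : t, closedBall (i : X) ((C i).r / 3) ⊆ ⋃ i : t, ball (i : X) ((C i).r / 2) :=
    iUnion_mono fun i => closedBall_subset_ball (by linarith [(C i).r_pos])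
  obtain ⟨π, hπ⟩ := PartitionOfUnity.exists_isSubordinate
    (isClosed_iUnion_of_finite fun _ => isClosed_closedBall) _ (fun _ => isOpen_ball) hS
  obtain ⟨s₀, hs₀, hs₀r⟩ := exists_pos_forall_le_of_finite fun i : t => half_pos (C i).r_pos
  have hψ := convexOn_toReal_of_ereal hΨbot hΨconv
  have hΦ' := hΦ.differentiable one_ne_zero
  refine ⟨⋃ i : t, ball (i : X) ((C i).r / 3), ⋃ i : t, ball (i : X) ((C i).r / 2),
    isOpen_iUnion fun _ => isOpen_ball, isOpen_iUnion fun _ => isOpen_ball,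
    hKW, (closure_iUnion_ball_subset _ _).trans hS, s₀, hs₀, chartDeformation C π,
    continuous_chartDeformation.continuousOn, fun s hs w => norm_chartDeformation_sub_le hπ hs w,
    fun s _ w hw => chartDeformation_eq_self hπ s hw,
    fun s hs w => ILam_chartDeformation_le_add hΨbot hψ hΦ' hlam hδ₀.le hπ hs.1
      (fun i => hs.2.trans (hs₀r i)) w,
    fun s hs w hw => ILam_chartDeformation_le_sub hΨbot hψ hΦ' hlam hδ₀.le hπ hs.1
      (fun i => hs.2.trans (hs₀r i)) (iUnion_mono (fun i => ball_subset_closedBall) hw)⟩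

theorem deformation_lemma
    [CompleteSpace X]
    (Ψ : X → EReal) (Φ : X → ℝ)
    -- (Ψ1)
    (hΨ0 : Ψ 0 = 0)
    (hΨnn : ∀ u : X, 0 ≤ Ψ u)
    (hΨlsc : LowerSemicontinuous Ψ)
    (hΨconv : ∀ u v : X, ∀ a b : ℝ, 0 ≤ a → 0 ≤ b → a + b = 1 →
      Ψ (a • u + b • v) ≤ (a : EReal) * Ψ u + (b : EReal) * Ψ v)
    -- (Φ1)
    (hΦ : ContDiff ℝ 1 Φ)
    -- the data
    (lam : ℝ) (hlam : 0 < lam)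
    (A : Set X) (hAclosed : IsClosed A) (hAbdd : IsBounded A)
    (c σ : ℝ) (hσ : 0 < σ)
    (δ₀ : ℝ) (hδ₀ : 0 < δ₀)
    -- on 𝒜 = A ∩ {c − 3σ ≤ I_λ ≤ c + 3σ} there are strictly descent directions
    (hdesc : ∀ u ∈ A ∩ {w : X | ((c - 3 * σ : ℝ) : EReal) ≤ ILam Ψ Φ lam w ∧
        ILam Ψ Φ lam w ≤ ((c + 3 * σ : ℝ) : EReal)},
      ∃ v : X, v ≠ u ∧
        (lam : EReal) * (Ψ v - Ψ u) - ((fderiv ℝ Φ u (v - u) : ℝ) : EReal) <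
          ((-(5 * δ₀ * ‖v - u‖) : ℝ) : EReal))
    -- K ⊂ 𝒜 relatively compact
    (K : Set X)
    (hK : K ⊆ A ∩ {w : X | ((c - 3 * σ : ℝ) : EReal) ≤ ILam Ψ Φ lam w ∧
        ILam Ψ Φ lam w ≤ ((c + 3 * σ : ℝ) : EReal)})
    (hKcomp : IsCompact (closure K)) :
    ∃ (W W' : Set X), IsOpen W ∧ IsOpen W' ∧
      closure K ⊆ W ∧ closure W ⊆ W' ∧
      ∃ s₀ : ℝ, 0 < s₀ ∧ ∃ η : ℝ → X → X,
        ContinuousOn (fun p : ℝ × X => η p.1 p.2) (Ici 0 ×ˢ univ) ∧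
        -- (i)
        (∀ s ∈ Ici (0 : ℝ), ∀ w : X, ‖η s w - w‖ ≤ s) ∧
        (∀ s ∈ Ici (0 : ℝ), ∀ w : X, w ∉ W' → η s w = w) ∧
        -- (ii)
        (∀ s ∈ Icc 0 s₀, ∀ w : X,
          ILam Ψ Φ lam (η s w) ≤ ILam Ψ Φ lam w + ((δ₀ * s : ℝ) : EReal)) ∧
        -- (iii)
        (∀ s ∈ Icc 0 s₀, ∀ w ∈ W, ((c - σ : ℝ) : EReal) ≤ ILam Ψ Φ lam w →
          ILam Ψ Φ lam (η s w) ≤ ILam Ψ Φ lam w - ((2 * δ₀ * s : ℝ) : EReal)) :=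
  deformation_lemma_general Ψ Φ hΨnn hΨlsc hΨconv hΦ lam hlam A hAclosed c σ hσ δ₀ hδ₀ hdesc K hK
    hKcomp
end
end
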